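/- arXiv:1608.07226 — 2 statements merged into one kernel-verified Lean document; each statement's English description precedes it below -/
import Mathlib

section
/- Let Y be a P-integrable G-adapted process and let G̃_t = F^S_t ∨ F^H_t ⊆ G_t. Then for every t ∈ [0,T]: 1_{τ > t} · (o,G̃-optional projection of Y at t) = 1_{τ > t} · (o,F^S-optional projection of Y_t 1_{τ>t}) / (o,F^S-optional projection of 1_{τ>t}), where the optional projections are taken with respect to the indicated filtrations under P. -/
open MeasureTheory ProbabilityTheory Filter Set
open scoped ENNReal NNReal

noncomputable section

variable {Ω : Type*} [m0 : MeasurableSpace Ω]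

/-- The predictable σ-algebra on `ℝ × Ω` associated with a filtration `ℱ`. -/
def predictableSigma (ℱ : Filtration ℝ m0) : MeasurableSpace (ℝ × Ω) :=
  MeasurableSpace.generateFrom
    ({s | ∃ u v : ℝ, ∃ A : Set Ω, u ≤ v ∧ MeasurableSet[ℱ u] A ∧ s = Set.Ioc u v ×ˢ A} ∪
      {s | ∃ A : Set Ω, MeasurableSet[ℱ 0] A ∧ s = ({0} : Set ℝ) ×ˢ A})

/-- A process is `ℱ`-predictable if it is measurable w.r.t. the predictable σ-algebra. -/
def IsPredictable (ℱ : Filtration ℝ m0) (φ : ℝ → Ω → ℝ) : Prop :=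
  Measurable[predictableSigma ℱ] fun p : ℝ × Ω => φ p.1 p.2

/-- Martingale property on the time interval `[0,T]`. -/
def MartingaleOn (P : Measure Ω) (ℱ : Filtration ℝ m0) (T : ℝ) (M : ℝ → Ω → ℝ) : Prop :=
  (∀ t ∈ Set.Icc (0:ℝ) T, StronglyMeasurable[ℱ t] (M t) ∧ Integrable (M t) P) ∧
  ∀ s t : ℝ, 0 ≤ s → s ≤ t → t ≤ T → P[M t | ℱ s] =ᵐ[P] M s

/-- `W` is a Brownian motion w.r.t. `(ℱ, P)` on `[0,T]`. -/
def IsBMOn (P : Measure Ω) (ℱ : Filtration ℝ m0) (T : ℝ) (W : ℝ → Ω → ℝ) : Prop :=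
  (∀ t ∈ Set.Icc (0:ℝ) T, StronglyMeasurable[ℱ t] (W t)) ∧
  (∀ᵐ ω ∂P, W 0 ω = 0) ∧
  (∀ᵐ ω ∂P, ContinuousOn (fun t => W t ω) (Set.Icc 0 T)) ∧
  ∀ s t : ℝ, 0 ≤ s → s ≤ t → t ≤ T →
    Measure.map (fun ω => W t ω - W s ω) P = gaussianReal 0 (Real.toNNReal (t - s)) ∧
    Indep (MeasurableSpace.comap (fun ω => W t ω - W s ω) inferInstance) (ℱ s) P

/-- `W` is a Brownian motion on the stochastic interval `[0, τ ∧ T]` w.r.t. `(𝔾, P)`: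
it coincides there with a genuine `(𝔾, P)`-Brownian motion. -/
def IsBMOnStoppedInterval (P : Measure Ω) (𝔾 : Filtration ℝ m0) (T : ℝ) (τ : Ω → ℝ)
    (W : ℝ → Ω → ℝ) : Prop :=
  ∃ β : ℝ → Ω → ℝ, IsBMOn P 𝔾 T β ∧
    ∀ t ∈ Set.Icc (0:ℝ) T, ∀ᵐ ω ∂P, W (min t (τ ω)) ω = β (min t (τ ω)) ω

/-- `N` is (a version of) the stochastic integral `∫ φ dM` on `[0,T]`, where `M` is a
continuous `(ℱ,P)`-martingale whose quadratic variation has density `q`, i.e.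
`⟨M⟩_t = ∫_0^t q_u du`.  The integral is characterized by: `N₀ = 0`, `N` adapted with
continuous paths, `⟨N, M⟩_t = ∫_0^t φ_u q_u du` and `⟨N⟩_t = ∫_0^t φ_u² q_u du`,
the brackets being encoded through the associated martingale properties. -/
def IsStochInt (P : Measure Ω) (ℱ : Filtration ℝ m0) (T : ℝ) (φ M q N : ℝ → Ω → ℝ) : Prop :=
  (∀ᵐ ω ∂P, N 0 ω = 0) ∧
  (∀ t ∈ Set.Icc (0:ℝ) T, StronglyMeasurable[ℱ t] (N t)) ∧
  (∀ᵐ ω ∂P, ContinuousOn (fun t => N t ω) (Set.Icc 0 T)) ∧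
  MartingaleOn P ℱ T (fun t ω => N t ω * M t ω - ∫ u in Set.Ioc (0:ℝ) t, φ u ω * q u ω) ∧
  MartingaleOn P ℱ T (fun t ω => (N t ω) ^ 2 - ∫ u in Set.Ioc (0:ℝ) t, (φ u ω) ^ 2 * q u ω)

/-- Local martingale property on `[0,T]`. -/
def IsLocalMartOn (P : Measure Ω) (ℱ : Filtration ℝ m0) (T : ℝ) (X : ℝ → Ω → ℝ) : Prop :=
  ∃ τn : ℕ → Ω → ℝ, (∀ n, IsStoppingTime ℱ (fun ω => ((τn n ω : ℝ) : WithTop ℝ))) ∧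
    (∀ᵐ ω ∂P, Tendsto (fun n => τn n ω) atTop atTop) ∧
    ∀ n, MartingaleOn P ℱ T fun t ω => X (min t (τn n ω)) ω

/-- `Z` is the `(ℍ,P)`-optional projection of `Y`. -/
def IsOptProj (P : Measure Ω) (ℍ : Filtration ℝ m0) (Y Z : ℝ → Ω → ℝ) : Prop :=
  Adapted ℍ Z ∧
  ∀ (σ : Ω → ℝ) (hσ : IsStoppingTime ℍ (fun ω => ((σ ω : ℝ) : WithTop ℝ))),
    ∀ᵐ ω ∂P, Z (σ ω) ω = (P[fun ω' => Y (σ ω') ω' | hσ.measurableSpace]) ω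

/-- A predictable (announceable) stopping time. -/
def IsPredStoppingTime (ℍ : Filtration ℝ m0) (σ : Ω → ℝ) : Prop :=
  IsStoppingTime ℍ (fun ω => ((σ ω : ℝ) : WithTop ℝ)) ∧ ∃ σs : ℕ → Ω → ℝ,
    (∀ n, IsStoppingTime ℍ (fun ω => ((σs n ω : ℝ) : WithTop ℝ))) ∧
    (∀ n ω, σs n ω ≤ σs (n + 1) ω) ∧ (∀ n ω, 0 < σ ω → σs n ω < σ ω) ∧
    ∀ ω, Tendsto (fun n => σs n ω) atTop (nhds (σ ω))

/-- The σ-algebra of events strictly prior to a stopping time `σ`. -/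
def sigmaPast (ℍ : Filtration ℝ m0) (σ : Ω → ℝ) : MeasurableSpace Ω :=
  (ℍ 0 : MeasurableSpace Ω) ⊔ MeasurableSpace.generateFrom
    {s | ∃ t : ℝ, ∃ A : Set Ω, MeasurableSet[ℍ t] A ∧ s = A ∩ {ω | t < σ ω}}

/-- `Z` is the `(ℍ,P)`-predictable projection of `Y`. -/
def IsPredProj (P : Measure Ω) (ℍ : Filtration ℝ m0) (Y Z : ℝ → Ω → ℝ) : Prop :=
  IsPredictable ℍ Z ∧
  ∀ σ : Ω → ℝ, IsPredStoppingTime ℍ σ →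
    ∀ᵐ ω ∂P, Z (σ ω) ω = (P[fun ω' => Y (σ ω') ω' | sigmaPast ℍ σ]) ω

/-- The natural filtration (σ-algebra at time `t`) of the death indicator `H_t = 1_{τ ≤ t}`. -/
def deathSigma (τ : Ω → ℝ) (t : ℝ) : MeasurableSpace Ω :=
  MeasurableSpace.generateFrom {A : Set Ω | ∃ s : ℝ, s ≤ t ∧ A = {ω | τ ω ≤ s}}


/-- key lemma for optional projections under progressive enlargement:
`1_{τ > t} · (ᵒ׳ᴳ̃Y)_t = 1_{τ > t} · ᵒ׳ᶠˢ(Y_t 1_{τ>t}) / ᵒ׳ᶠˢ(1_{τ>t})`. -/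
theorem optional_projection_enlargement_formula
    (P : Measure Ω) [IsProbabilityMeasure P]
    (T : ℝ) (hT : 0 < T)
    (τ : Ω → ℝ) (hτmeas : Measurable τ) (hτnonneg : ∀ ω, 0 ≤ τ ω)
    (ℱS 𝔾t 𝔾 : Filtration ℝ m0)
    (h𝔾t : ∀ t : ℝ, (𝔾t t : MeasurableSpace Ω) = (ℱS t : MeasurableSpace Ω) ⊔ deathSigma τ t)
    (hsub : ∀ t : ℝ, (𝔾t t : MeasurableSpace Ω) ≤ (𝔾 t : MeasurableSpace Ω))
    -- P(τ ≤ t | ℱ^S_t) < 1 :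
    (hFS : ∀ t ∈ Set.Icc (0:ℝ) T, ∀ᵐ ω ∂P,
      (P[(fun ω' => if τ ω' ≤ t then (1:ℝ) else 0) | ℱS t]) ω < 1)
    (Y : ℝ → Ω → ℝ) (hYadp : Adapted 𝔾 Y)
    (hYint : ∀ t ∈ Set.Icc (0:ℝ) T, Integrable (Y t) P)
    (Z₁ Z₂ Z₃ : ℝ → Ω → ℝ)
    (hZ₁ : IsOptProj P 𝔾t Y Z₁)
    (hZ₂ : IsOptProj P ℱS (fun t ω => Y t ω * (if t < τ ω then (1:ℝ) else 0)) Z₂)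
    (hZ₃ : IsOptProj P ℱS (fun t ω => if t < τ ω then (1:ℝ) else 0) Z₃)
    (hZ₃pos : ∀ t ∈ Set.Icc (0:ℝ) T, ∀ᵐ ω ∂P, 0 < Z₃ t ω) :
    ∀ t ∈ Set.Icc (0:ℝ) T, ∀ᵐ ω ∂P, t < τ ω → Z₁ t ω = Z₂ t ω / Z₃ t ω := by
  intro t ht
  classical
  have hmle : (ℱS t : MeasurableSpace Ω) ≤ m0 := ℱS.le t
  have hmGle : (𝔾t t : MeasurableSpace Ω) ≤ m0 := 𝔾t.le t
  have hmmG : (ℱS t : MeasurableSpace Ω) ≤ 𝔾t t := by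
    rw [h𝔾t]; exact le_sup_left
  have hdG : (deathSigma τ t : MeasurableSpace Ω) ≤ 𝔾t t := by
    rw [h𝔾t]; exact le_sup_right
  set D : Set Ω := {ω | t < τ ω} with hD_def
  have hD_death : MeasurableSet[deathSigma τ t] D := by
    have h1 : MeasurableSet[deathSigma τ t] {ω | τ ω ≤ t} :=
      MeasurableSpace.measurableSet_generateFrom ⟨t, le_refl t, rfl⟩
    have h2 := h1.compl
    have h3 : {ω | τ ω ≤ t}ᶜ = D := by ext ω; simp [hD_def, not_le]
    rwa [h3] at h2
  have hdich : ∀ C : Set Ω, MeasurableSet[deathSigma τ t] C → C ∩ D = ∅ ∨ D ⊆ C := by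
    intro C hC
    refine MeasurableSpace.generateFrom_induction
      (p := fun s (_ : MeasurableSet[deathSigma τ t] s) => s ∩ D = ∅ ∨ D ⊆ s)
      _ ?_ ?_ ?_ ?_ C hC
    · rintro s ⟨u, hu, rfl⟩ _
      left
      rw [Set.eq_empty_iff_forall_notMem]
      rintro ω ⟨h1, h2⟩
      simp only [Set.mem_setOf_eq, hD_def] at h1 h2
      linarith
    · left; simp
    · rintro s _ (h1 | h2)
      · right
        intro ω hω
        simp only [Set.mem_compl_iff]
        intro hs'
        exact Set.notMem_empty ω (h1 ▸ Set.mem_inter hs' hω)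
      · left
        rw [Set.eq_empty_iff_forall_notMem]
        rintro ω ⟨h3, h4⟩
        exact h3 (h2 h4)
    · intro g _ ih
      by_cases h : ∃ n, D ⊆ g n
      · obtain ⟨n, hn⟩ := h
        exact Or.inr (hn.trans (Set.subset_iUnion g n))
      · push_neg at h
        left
        rw [Set.iUnion_inter]
        exact Set.iUnion_eq_empty.mpr fun n => (ih n).resolve_right (h n)
  have hproj : ∀ (ℍ : Filtration ℝ m0) (W Z : ℝ → Ω → ℝ), IsOptProj P ℍ W Z →
      Z t =ᵐ[P] P[W t | (ℍ t : MeasurableSpace Ω)] := by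
    intro ℍ W Z hZo
    have h := hZo.2 (fun _ => t) (isStoppingTime_const ℍ t)
    rwa [IsStoppingTime.measurableSpace_const] at h
  have e1 : Z₁ t =ᵐ[P] P[Y t | (𝔾t t : MeasurableSpace Ω)] := hproj 𝔾t Y Z₁ hZ₁
  have e2 : Z₂ t =ᵐ[P] P[D.indicator (Y t) | (ℱS t : MeasurableSpace Ω)] := by
    refine (hproj ℱS _ Z₂ hZ₂).trans (condExp_congr_ae (ae_of_all _ fun ω => ?_))
    by_cases hω : t < τ ω <;>
      simp [Set.indicator_apply, hD_def, Set.mem_setOf_eq, hω]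
  have e3 : Z₃ t =ᵐ[P] P[D.indicator (fun _ => (1:ℝ)) | (ℱS t : MeasurableSpace Ω)] := by
    refine (hproj ℱS _ Z₃ hZ₃).trans (condExp_congr_ae (ae_of_all _ fun ω => ?_))
    by_cases hω : t < τ ω <;>
      simp [Set.indicator_apply, hD_def, Set.mem_setOf_eq, hω]
  have hYt : Integrable (Y t) P := hYint t ht
  have hZ3pos' : ∀ᵐ ω ∂P, 0 < Z₃ t ω := hZ₃pos t ht

  have hmle : ℱS t ≤ m0 := hmmG.trans hmGle
  have hD_mG : MeasurableSet[𝔾t t] D := hdG _ hD_death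
  have hD0 : MeasurableSet[m0] D := hmGle _ hD_mG
  set e : Ω → ℝ := D.indicator (fun _ => (1:ℝ)) with he_def
  have he_sm : StronglyMeasurable[𝔾t t] e := stronglyMeasurable_const.indicator hD_mG
  have he_bd : ∀ ω, ‖e ω‖ ≤ 1 := fun ω => by
    by_cases h : ω ∈ D <;> simp [he_def, h]
  have he_int : Integrable e P :=
    Integrable.mono' (integrable_const 1) ((he_sm.mono hmGle).aestronglyMeasurable)
      (ae_of_all _ he_bd)
  have hql : D.indicator (Y t) = fun ω => e ω * Y t ω := by
    funext ω; by_cases h : ω ∈ D <;> simp [he_def, h]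
  have hq_int : Integrable (fun ω => e ω * Y t ω) P := by
    rw [← hql]; exact hYt.indicator hD0
  have hZ1int : Integrable (Z₁ t) P := integrable_condExp.congr e1.symm
  have hZ2int : Integrable (Z₂ t) P := integrable_condExp.congr e2.symm
  have hZ3int : Integrable (Z₃ t) P := integrable_condExp.congr e3.symm
  have hZ3le1 : ∀ᵐ ω ∂P, Z₃ t ω ≤ 1 := by
    have h1 : e ≤ᵐ[P] (fun _ => (1:ℝ)) := ae_of_all _ fun ω => by
      by_cases h : ω ∈ D <;> simp [he_def, h]
    have hmono := condExp_mono (m := ℱS t) (μ := P) he_int (integrable_const (1:ℝ)) h1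
    rw [condExp_const hmle] at hmono
    filter_upwards [e3, hmono] with ω h2 h3
    rw [h2]; exact h3
  have hZ3bd : ∀ᵐ ω ∂P, ‖Z₃ t ω‖ ≤ 1 := by
    filter_upwards [hZ3pos', hZ3le1] with ω h0 h1
    rw [Real.norm_eq_abs, abs_of_pos h0]; exact h1
  set f₁ : Ω → ℝ := D.indicator (fun ω => Z₃ t ω * Z₁ t ω) with hf₁_def
  set f₂ : Ω → ℝ := D.indicator (Z₂ t) with hf₂_def
  have hf₁sm : StronglyMeasurable[𝔾t t] f₁ :=
    (((hZ₃.1 t).stronglyMeasurable.mono hmmG).mul (hZ₁.1 t).stronglyMeasurable).indicator hD_mG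
  have hf₂sm : StronglyMeasurable[𝔾t t] f₂ := ((hZ₂.1 t).stronglyMeasurable.mono hmmG).indicator hD_mG
  have hf₁int : Integrable f₁ P := by
    refine Integrable.mono' hZ1int.norm (hf₁sm.mono hmGle).aestronglyMeasurable ?_
    filter_upwards [hZ3bd] with ω h3
    rw [hf₁_def]
    by_cases h : ω ∈ D
    · simp only [Set.indicator_of_mem h, norm_mul, norm_norm]
      nlinarith [norm_nonneg (Z₁ t ω), norm_nonneg (Z₃ t ω)]
    · simp [Set.indicator_of_notMem h, norm_nonneg]
  have hf₂int : Integrable f₂ P := hZ2int.indicator hD0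
  have hZ3q_int : Integrable (fun ω => Z₃ t ω * (e ω * Y t ω)) P := by
    refine Integrable.mono' hq_int.norm
      ((((hZ₃.1 t).stronglyMeasurable.mono hmle).aestronglyMeasurable).mul hq_int.aestronglyMeasurable) ?_
    filter_upwards [hZ3bd] with ω h3
    rw [norm_mul]
    nlinarith [norm_nonneg (e ω * Y t ω)]
  have hZ2e_int : Integrable (fun ω => Z₂ t ω * e ω) P := by
    refine Integrable.mono' hZ2int.norm
      ((((hZ₂.1 t).stronglyMeasurable.mono hmle).aestronglyMeasurable).mul he_int.aestronglyMeasurable) ?_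
    refine ae_of_all _ fun ω => ?_
    rw [norm_mul]
    nlinarith [norm_nonneg (Z₂ t ω), he_bd ω, norm_nonneg (e ω)]
  -- key computation for sets in ℱS t
  have hA_eq : ∀ A : Set Ω, MeasurableSet[ℱS t] A →
      ∫ ω in A, f₁ ω ∂P = ∫ ω in A, f₂ ω ∂P := by
    intro A hA
    have hA_mG : MeasurableSet[𝔾t t] A := hmmG _ hA
    have hA0 : MeasurableSet[m0] A := hmGle _ hA_mG
    have h1 : P[fun ω => e ω * Y t ω|𝔾t t] =ᵐ[P] fun ω => e ω * (P[Y t|𝔾t t]) ω :=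
      condExp_mul_of_stronglyMeasurable_left he_sm hq_int hYt
    have hf₁ae : f₁ =ᵐ[P] fun ω => Z₃ t ω * (P[fun ω => e ω * Y t ω|𝔾t t]) ω := by
      filter_upwards [e1, h1] with ω hω1 hω2
      rw [hf₁_def]
      by_cases h : ω ∈ D
      · simp only [Set.indicator_of_mem h]
        rw [hω1, hω2]
        simp [he_def, Set.indicator_of_mem h]
      · simp only [Set.indicator_of_notMem h]
        rw [hω2]
        simp [he_def, Set.indicator_of_notMem h]
    have h2 : P[fun ω => Z₃ t ω * (e ω * Y t ω)|𝔾t t]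
        =ᵐ[P] fun ω => Z₃ t ω * (P[fun ω => e ω * Y t ω|𝔾t t]) ω :=
      condExp_stronglyMeasurable_mul_of_bound hmGle ((hZ₃.1 t).stronglyMeasurable.mono hmmG) hq_int 1 hZ3bd
    have h3 : P[fun ω => Z₃ t ω * (e ω * Y t ω)|ℱS t]
        =ᵐ[P] fun ω => Z₃ t ω * (P[fun ω => e ω * Y t ω|ℱS t]) ω :=
      condExp_stronglyMeasurable_mul_of_bound hmle (hZ₃.1 t).stronglyMeasurable hq_int 1 hZ3bd
    have h4 : P[fun ω => Z₂ t ω * e ω|ℱS t] =ᵐ[P] fun ω => Z₂ t ω * (P[e|ℱS t]) ω :=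
      condExp_mul_of_stronglyMeasurable_left (hZ₂.1 t).stronglyMeasurable hZ2e_int he_int
    have hPq : P[fun ω => e ω * Y t ω|ℱS t] =ᵐ[P] Z₂ t := by
      rw [← hql]; exact e2.symm
    have hPe : P[e|ℱS t] =ᵐ[P] Z₃ t := e3.symm
    calc ∫ ω in A, f₁ ω ∂P
        = ∫ ω in A, Z₃ t ω * (P[fun ω => e ω * Y t ω|𝔾t t]) ω ∂P := by
          refine setIntegral_congr_ae hA0 (hf₁ae.mono fun ω h _ => h)
      _ = ∫ ω in A, (P[fun ω => Z₃ t ω * (e ω * Y t ω)|𝔾t t]) ω ∂P := by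
          refine setIntegral_congr_ae hA0 (h2.symm.mono fun ω h _ => h)
      _ = ∫ ω in A, Z₃ t ω * (e ω * Y t ω) ∂P := setIntegral_condExp hmGle hZ3q_int hA_mG
      _ = ∫ ω in A, (P[fun ω => Z₃ t ω * (e ω * Y t ω)|ℱS t]) ω ∂P :=
          (setIntegral_condExp hmle hZ3q_int hA).symm
      _ = ∫ ω in A, Z₃ t ω * (P[fun ω => e ω * Y t ω|ℱS t]) ω ∂P := by
          refine setIntegral_congr_ae hA0 (h3.mono fun ω h _ => h)
      _ = ∫ ω in A, Z₃ t ω * Z₂ t ω ∂P := by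
          refine setIntegral_congr_ae hA0 (hPq.mono fun ω h _ => by rw [h])
      _ = ∫ ω in A, Z₂ t ω * (P[e|ℱS t]) ω ∂P := by
          refine setIntegral_congr_ae hA0 (hPe.mono fun ω h _ => by rw [h]; ring)
      _ = ∫ ω in A, (P[fun ω => Z₂ t ω * e ω|ℱS t]) ω ∂P := by
          refine setIntegral_congr_ae hA0 (h4.symm.mono fun ω h _ => h)
      _ = ∫ ω in A, Z₂ t ω * e ω ∂P := setIntegral_condExp hmle hZ2e_int hA
      _ = ∫ ω in A, f₂ ω ∂P := by
          refine setIntegral_congr_ae hA0 (ae_of_all _ fun ω _ => ?_)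
          rw [hf₂_def]
          by_cases h : ω ∈ D <;> simp [he_def, h]
  -- the pi-system
  set pSys : Set (Set Ω) :=
    {B | ∃ A C : Set Ω, MeasurableSet[ℱS t] A ∧ MeasurableSet[deathSigma τ t] C ∧ B = A ∩ C} with hpSys_def
  have hpSyspi : IsPiSystem pSys := by
    rintro B1 ⟨A, C, hA, hC, rfl⟩ B2 ⟨A', C', hA', hC', rfl⟩ _
    exact ⟨A ∩ A', C ∩ C', hA.inter hA', hC.inter hC', by ext ω; simp; tauto⟩
  have hgen : 𝔾t t = MeasurableSpace.generateFrom pSys := by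
    rw [(h𝔾t t)]
    apply le_antisymm
    · refine sup_le (fun s hs => ?_) (fun s hs => ?_)
      · exact MeasurableSpace.measurableSet_generateFrom
          ⟨s, Set.univ, hs, MeasurableSet.univ, by simp⟩
      · exact MeasurableSpace.measurableSet_generateFrom
          ⟨Set.univ, s, MeasurableSet.univ, hs, by simp⟩
    · refine MeasurableSpace.generateFrom_le ?_
      rintro B ⟨A, C, hA, hC, rfl⟩
      exact MeasurableSet.inter ((le_sup_left : ℱS t ≤ ℱS t ⊔ deathSigma τ t) _ hA)
        ((le_sup_right : deathSigma τ t ≤ ℱS t ⊔ deathSigma τ t) _ hC)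
  have hbasic : ∀ B ∈ pSys, ∫ ω in B, f₁ ω ∂P = ∫ ω in B, f₂ ω ∂P := by
    rintro B ⟨A, C, hA, hC, rfl⟩
    rcases hdich C hC with hC1 | hC2
    · rw [hf₁_def, hf₂_def, setIntegral_indicator hD0, setIntegral_indicator hD0]
      have hempty : (A ∩ C) ∩ D = ∅ := by rw [Set.inter_assoc, hC1, Set.inter_empty]
      rw [hempty]
      simp
    · have hACD : (A ∩ C) ∩ D = A ∩ D := by
        rw [Set.inter_assoc, Set.inter_eq_right.mpr hC2]
      have h2 := hA_eq A hA
      rw [hf₁_def, hf₂_def, setIntegral_indicator hD0, setIntegral_indicator hD0] at h2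
      rw [hf₁_def, hf₂_def, setIntegral_indicator hD0, setIntegral_indicator hD0, hACD]
      exact h2
  have htot : ∫ ω, f₁ ω ∂P = ∫ ω, f₂ ω ∂P := by
    have h := hbasic Set.univ ⟨Set.univ, Set.univ, MeasurableSet.univ, MeasurableSet.univ,
      by simp⟩
    simpa using h
  have hall : ∀ B : Set Ω, MeasurableSet[𝔾t t] B →
      ∫ ω in B, f₁ ω ∂P = ∫ ω in B, f₂ ω ∂P := by
    intro B hB
    refine MeasurableSpace.induction_on_inter (m := 𝔾t t)
      (C := fun B _ => ∫ ω in B, f₁ ω ∂P = ∫ ω in B, f₂ ω ∂P) hgen hpSyspi ?_ hbasic ?_ ?_ B hB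
    · simp
    · intro s hs hsC
      have hs0 : MeasurableSet[m0] s := hmGle _ hs
      have e1 := integral_add_compl hs0 hf₁int
      have e2 := integral_add_compl hs0 hf₂int
      linarith [htot]
    · intro g hdisj hmeas hC
      rw [integral_iUnion (fun i => hmGle _ (hmeas i)) hdisj hf₁int.integrableOn,
        integral_iUnion (fun i => hmGle _ (hmeas i)) hdisj hf₂int.integrableOn]
      exact tsum_congr hC
  have hf12 : f₁ =ᵐ[P] f₂ := by
    have htrim : f₁ =ᵐ[P.trim hmGle] f₂ := by
      refine @ae_eq_of_forall_setIntegral_eq_of_sigmaFinite Ω ℝ (𝔾t t) (P.trim hmGle) _ _ _ _ _ _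
        (fun s _ _ => (hf₁int.trim hmGle hf₁sm).restrict)
        (fun s _ _ => (hf₂int.trim hmGle hf₂sm).restrict) ?_
      intro s hs _
      rw [← setIntegral_trim hmGle hf₁sm hs, ← setIntegral_trim hmGle hf₂sm hs]
      exact hall s hs
    exact ae_eq_of_ae_eq_trim htrim
  filter_upwards [hf12, hZ3pos'] with ω h1 h2 hmem
  have hmem' : ω ∈ D := hmem
  rw [hf₁_def, hf₂_def] at h1
  rw [Set.indicator_of_mem hmem', Set.indicator_of_mem hmem'] at h1
  rw [eq_div_iff (ne_of_gt h2), mul_comm]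
  exact h1
end
end

section
/- Let Y be an F-predictable P-integrable process and suppose τ has F-hazard process Γ_t = ∫_0^t γ_u du. Then for every t ∈ [0,T]: 1_{τ ≥ t} · (p,G̃-predictable projection of Y at t) = 1_{τ ≥ t} · [p,F^S-projection of (Y_t e^{-∫_0^t γ_u du})] / [p,F^S-projection of e^{-∫_0^t γ_u du}]. -/
open MeasureTheory ProbabilityTheory Filter Set
open scoped ENNReal NNReal

noncomputable section

variable {Ω : Type*} [m0 : MeasurableSpace Ω]

/-- The σ-algebra of the strict past of a filtration at time `t` (augmented with `ℱ s` for
`s ≤ 0`). -/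
def preSigma (ℱ : Filtration ℝ m0) (t : ℝ) : MeasurableSpace Ω :=
  MeasurableSpace.generateFrom {A | ∃ s : ℝ, (s < t ∨ s ≤ 0) ∧ MeasurableSet[ℱ s] A}

lemma filtration_le_preSigma {ℱ : Filtration ℝ m0} {s t : ℝ} (hs : s < t ∨ s ≤ 0) :
    (ℱ s : MeasurableSpace Ω) ≤ preSigma ℱ t := fun A hA =>
  MeasurableSpace.measurableSet_generateFrom ⟨s, hs, hA⟩

lemma preSigma_le (ℱ : Filtration ℝ m0) (t : ℝ) : preSigma ℱ t ≤ m0 := by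
  refine MeasurableSpace.generateFrom_le ?_
  rintro A ⟨s, -, hA⟩
  exact ℱ.le s A hA

lemma isPiSystem_preSigma (ℱ : Filtration ℝ m0) (t : ℝ) :
    IsPiSystem {A : Set Ω | ∃ s : ℝ, (s < t ∨ s ≤ 0) ∧ MeasurableSet[ℱ s] A} := by
  rintro A ⟨s₁, hs₁, hA⟩ B ⟨s₂, hs₂, hB⟩ -
  refine ⟨max s₁ s₂, ?_, ?_⟩
  · rcases le_total s₁ s₂ with h | h
    · rwa [max_eq_right h]
    · rwa [max_eq_left h]
  · exact (ℱ.mono (le_max_left _ _) _ hA).inter (ℱ.mono (le_max_right _ _) _ hB)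

/-- Slices of a predictable process are measurable w.r.t. the strict past. -/
lemma IsPredictable.measurable_slice {ℱ : Filtration ℝ m0} {φ : ℝ → Ω → ℝ}
    (h : IsPredictable ℱ φ) (t : ℝ) : Measurable[preSigma ℱ t] (φ t) := by
  have hmap : @Measurable Ω (ℝ × Ω) (preSigma ℱ t) (predictableSigma ℱ)
      (fun ω => (t, ω)) := by
    refine @measurable_generateFrom Ω (ℝ × Ω) (preSigma ℱ t) _ _ ?_
    rintro S (⟨u, v, A, huv, hA, rfl⟩ | ⟨A, hA, rfl⟩)
    · classical
      have : (fun ω => ((t : ℝ), ω)) ⁻¹' (Set.Ioc u v ×ˢ A) =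
          if t ∈ Set.Ioc u v then A else ∅ := by
        ext ω; by_cases h' : t ∈ Set.Ioc u v <;> simp [Set.mem_preimage, h']
      rw [this]
      split_ifs with h'
      · exact filtration_le_preSigma (Or.inl h'.1) _ hA
      · exact @MeasurableSet.empty Ω (preSigma ℱ t)
    · classical
      have : (fun ω => ((t : ℝ), ω)) ⁻¹' (({0} : Set ℝ) ×ˢ A) =
          if t = 0 then A else ∅ := by
        ext ω; by_cases h' : t = 0 <;> simp [Set.mem_preimage, h', eq_comm]
      rw [this]
      split_ifs with h'
      · exact filtration_le_preSigma (Or.inr (le_of_eq h')) _ (h' ▸ hA)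
      · exact @MeasurableSet.empty Ω (preSigma ℱ t)
  exact h.comp hmap

section Aux

/-- Integrating out the first variable of a jointly measurable function is measurable. -/
lemma measurable_integral_Ioc {α : Type*} [mα : MeasurableSpace α] (f : ℝ × α → ℝ)
    (hf : Measurable f) (t : ℝ) :
    Measurable fun a => ∫ u in Set.Ioc (0:ℝ) t, f (u, a) := by
  have : StronglyMeasurable fun a => ∫ u, f (u, a) ∂(volume.restrict (Set.Ioc (0:ℝ) t)) :=
    hf.stronglyMeasurable.integral_prod_left'
  exact this.measurable

end Aux

/-- Restriction to `(-∞, t] × Ω` of a predictable set is `Borel ⊗ preSigma t` measurable. -/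
lemma predictableSigma_restrict_le {ℱ : Filtration ℝ m0} (t : ℝ) {S : Set (ℝ × Ω)}
    (hS : MeasurableSet[predictableSigma ℱ] S) :
    MeasurableSet[@Prod.instMeasurableSpace ℝ Ω inferInstance (preSigma ℱ t)]
      (S ∩ Set.Iic t ×ˢ (Set.univ : Set Ω)) := by
  letI mp := @Prod.instMeasurableSpace ℝ Ω inferInstance (preSigma ℱ t)
  have hprod : ∀ (s : Set ℝ) (B : Set Ω), MeasurableSet s → MeasurableSet[preSigma ℱ t] B →
      MeasurableSet[mp] (s ×ˢ B) := fun s B hs hB =>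
    @MeasurableSet.prod ℝ Ω inferInstance (preSigma ℱ t) s B hs hB
  have hR : MeasurableSet[mp] (Set.Iic t ×ˢ (Set.univ : Set Ω)) :=
    hprod _ _ measurableSet_Iic (@MeasurableSet.univ Ω (preSigma ℱ t))
  let 𝔪 : MeasurableSpace (ℝ × Ω) :=
    { MeasurableSet' := fun S => MeasurableSet[mp] (S ∩ Set.Iic t ×ˢ (Set.univ : Set Ω))
      measurableSet_empty := by simpa using @MeasurableSet.empty _ mp
      measurableSet_compl := by
        intro S hS
        have h1 : Sᶜ ∩ Set.Iic t ×ˢ (Set.univ : Set Ω) =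
            (Set.Iic t ×ˢ (Set.univ : Set Ω)) \ (S ∩ Set.Iic t ×ˢ (Set.univ : Set Ω)) := by
          ext p; by_cases hp : p ∈ Set.Iic t ×ˢ (Set.univ : Set Ω) <;> simp [hp]
        rw [h1]; exact MeasurableSet.diff hR hS
      measurableSet_iUnion := by
        intro f hf
        rw [Set.iUnion_inter]
        exact MeasurableSet.iUnion hf }
  have hle : predictableSigma ℱ ≤ 𝔪 := by
    refine MeasurableSpace.generateFrom_le ?_
    rintro S (⟨u, v, A, huv, hA, rfl⟩ | ⟨A, hA, rfl⟩)
    · show MeasurableSet[mp] _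
      rw [Set.prod_inter_prod]
      simp only [Set.inter_univ]
      by_cases hu : u < t
      · exact hprod _ _ (measurableSet_Ioc.inter measurableSet_Iic)
          (filtration_le_preSigma (Or.inl hu) _ hA)
      · have : Set.Ioc u v ∩ Set.Iic t = ∅ := by
          ext x; simp only [Set.mem_inter_iff, Set.mem_Ioc, Set.mem_Iic, Set.mem_empty_iff_false,
            iff_false]
          rintro ⟨⟨h1, -⟩, h2⟩
          exact hu (lt_of_lt_of_le h1 h2)
        rw [this, Set.empty_prod]
        exact @MeasurableSet.empty _ mp
    · show MeasurableSet[mp] _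
      rw [Set.prod_inter_prod]
      simp only [Set.inter_univ]
      exact hprod _ _ ((measurableSet_singleton 0).inter measurableSet_Iic)
        (filtration_le_preSigma (Or.inr le_rfl) _ hA)
  exact hle S hS

/-- The cumulated hazard `∫_0^t γ` is measurable w.r.t. the strict past at `t`. -/
lemma IsPredictable.measurable_intIoc {ℱ : Filtration ℝ m0} {γ : ℝ → Ω → ℝ}
    (hγ : IsPredictable ℱ γ) (t : ℝ) :
    Measurable[preSigma ℱ t] fun ω => ∫ u in Set.Ioc (0:ℝ) t, γ u ω := by
  classical
  letI mp := @Prod.instMeasurableSpace ℝ Ω inferInstance (preSigma ℱ t)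
  set R : Set (ℝ × Ω) := Set.Iic t ×ˢ (Set.univ : Set Ω) with hRdef
  have hR : MeasurableSet[mp] R :=
    @MeasurableSet.prod ℝ Ω inferInstance (preSigma ℱ t) _ _ measurableSet_Iic
      (@MeasurableSet.univ Ω (preSigma ℱ t))
  set g : ℝ × Ω → ℝ := R.indicator (fun p => γ p.1 p.2) with hgdef
  have hg : Measurable[mp] g := by
    intro b hb
    have : g ⁻¹' b = (((fun p : ℝ × Ω => γ p.1 p.2) ⁻¹' b) ∩ R) ∪
        (if (0:ℝ) ∈ b then Rᶜ else ∅) := by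
      ext p
      by_cases hp : p ∈ R <;> by_cases h0 : (0:ℝ) ∈ b <;>
        simp [g, Set.indicator_apply, hp, h0]
    rw [this]
    refine MeasurableSet.union (predictableSigma_restrict_le t (hγ hb)) ?_
    split_ifs
    · exact hR.compl
    · exact @MeasurableSet.empty _ mp
  have heq : (fun ω => ∫ u in Set.Ioc (0:ℝ) t, γ u ω) =
      fun ω => ∫ u in Set.Ioc (0:ℝ) t, g (u, ω) := by
    funext ω
    refine (setIntegral_congr_fun measurableSet_Ioc fun u hu => ?_).symm
    have : (u, ω) ∈ R := ⟨hu.2, trivial⟩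
    exact Set.indicator_of_mem this _
  rw [heq]
  exact @measurable_integral_Ioc Ω (preSigma ℱ t) g hg t

lemma isPredStoppingTime_const (ℍ : Filtration ℝ m0) (t : ℝ) :
    IsPredStoppingTime ℍ (fun _ => t) := by
  refine ⟨isStoppingTime_const ℍ t, fun n _ => t - 1 / (n + 1), fun n => isStoppingTime_const _ _,
    ?_, ?_, ?_⟩
  · intro n ω
    have h1 : (1 : ℝ) / ((n:ℝ) + 1 + 1) ≤ 1 / ((n:ℝ) + 1) := by
      apply one_div_le_one_div_of_le
      · positivity
      · linarith
    push_cast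
    linarith
  · intro n ω _
    have : (0:ℝ) < 1 / (n + 1) := by positivity
    linarith
  · intro ω
    have h1 : Tendsto (fun n : ℕ => 1 / ((n:ℝ) + 1)) atTop (nhds 0) :=
      tendsto_one_div_add_atTop_nhds_zero_nat
    have := (tendsto_const_nhds (x := t) (f := atTop (α := ℕ))).sub h1
    simpa using this

lemma measurableSet_sigmaPast_of_lt {ℍ : Filtration ℝ m0} {s t : ℝ} (h : s < t) {A : Set Ω}
    (hA : MeasurableSet[ℍ s] A) : MeasurableSet[sigmaPast ℍ (fun _ => t)] A := by
  have : A = A ∩ {ω : Ω | s < (fun _ => t) ω} := by simp [h]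
  rw [this]
  exact (le_sup_right : _ ≤ sigmaPast ℍ (fun _ => t)) _
    (MeasurableSpace.measurableSet_generateFrom ⟨s, A, hA, rfl⟩)

lemma measurableSet_sigmaPast_zero {ℍ : Filtration ℝ m0} {t : ℝ} {A : Set Ω}
    (hA : MeasurableSet[ℍ 0] A) : MeasurableSet[sigmaPast ℍ (fun _ => t)] A :=
  (le_sup_left : (ℍ 0 : MeasurableSpace Ω) ≤ sigmaPast ℍ (fun _ => t)) _ hA

lemma sigmaPast_const_le (ℍ : Filtration ℝ m0) (t : ℝ) :
    sigmaPast ℍ (fun _ => t) ≤ m0 := by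
  refine sup_le (ℍ.le 0) (MeasurableSpace.generateFrom_le ?_)
  rintro S ⟨s, A, hA, rfl⟩
  refine (ℍ.le s A hA).inter ?_
  by_cases h : s < t <;> simp [h]

lemma sigmaPast_const_mono {ℍ₁ ℍ₂ : Filtration ℝ m0} (h : ∀ s, (ℍ₁ s : MeasurableSpace Ω) ≤ ℍ₂ s)
    (σ : Ω → ℝ) : sigmaPast ℍ₁ σ ≤ sigmaPast ℍ₂ σ := by
  refine sup_le ((h 0).trans le_sup_left) (MeasurableSpace.generateFrom_le ?_)
  rintro S ⟨s, A, hA, rfl⟩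
  exact (le_sup_right : _ ≤ sigmaPast ℍ₂ σ) _
    (MeasurableSpace.measurableSet_generateFrom ⟨s, A, h s A hA, rfl⟩)

lemma sigmaPast_const_le_preSigma {ℱS ℱ : Filtration ℝ m0}
    (hsub : ∀ s, (ℱS s : MeasurableSpace Ω) ≤ ℱ s) (t : ℝ) :
    sigmaPast ℱS (fun _ => t) ≤ preSigma ℱ t := by
  refine sup_le ((hsub 0).trans (filtration_le_preSigma (Or.inr le_rfl)))
    (MeasurableSpace.generateFrom_le ?_)
  rintro S ⟨s, A, hA, rfl⟩
  by_cases h : s < t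
  · have : A ∩ {ω : Ω | s < t} = A := by simp [h]
    rw [this]
    exact filtration_le_preSigma (Or.inl h) _ (hsub s A hA)
  · have : A ∩ {ω : Ω | s < t} = ∅ := by simp [h]
    rw [this]
    exact @MeasurableSet.empty Ω (preSigma ℱ t)

lemma preSigma_le_sigmaPast_const (ℱS : Filtration ℝ m0) (t : ℝ) :
    preSigma ℱS t ≤ sigmaPast ℱS (fun _ => t) := by
  refine MeasurableSpace.generateFrom_le ?_
  rintro A ⟨s, hs | hs, hA⟩
  · exact measurableSet_sigmaPast_of_lt hs hA
  · exact measurableSet_sigmaPast_zero (ℱS.mono hs A hA)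

lemma tau_lt_iUnion {τ : Ω → ℝ} {t : ℝ} (ht : 0 < t) :
    {ω : Ω | τ ω < t} = ⋃ n : ℕ, {ω : Ω | τ ω ≤ t - t / (n + 1)} := by
  ext ω
  simp only [Set.mem_setOf_eq, Set.mem_iUnion]
  constructor
  · intro h
    have hδ : 0 < t - τ ω := by linarith
    obtain ⟨n, hn⟩ := exists_nat_gt (t / (t - τ ω))
    refine ⟨n, ?_⟩
    have hn1 : t / (t - τ ω) < (n:ℝ) + 1 := by linarith
    have h2 : t / ((n:ℝ) + 1) < t - τ ω := by
      rw [div_lt_iff₀ (by positivity)]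
      calc t = (t / (t - τ ω)) * (t - τ ω) := by field_simp
        _ < ((n:ℝ) + 1) * (t - τ ω) := by
            apply mul_lt_mul_of_pos_right hn1 hδ
        _ = (t - τ ω) * ((n:ℝ) + 1) := by ring
    linarith
  · rintro ⟨n, hn⟩
    have : 0 < t / ((n:ℝ) + 1) := by positivity
    linarith

lemma measurableSet_D {ℱS 𝔾t : Filtration ℝ m0} {τ : Ω → ℝ}
    (h𝔾t : ∀ s : ℝ, (𝔾t s : MeasurableSpace Ω) = (ℱS s : MeasurableSpace Ω) ⊔ deathSigma τ s)
    (hτnonneg : ∀ ω, 0 ≤ τ ω) {t : ℝ} (ht : 0 ≤ t) :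
    MeasurableSet[sigmaPast 𝔾t (fun _ => t)] {ω : Ω | t ≤ τ ω} := by
  rcases eq_or_lt_of_le ht with rfl | ht
  · have : {ω : Ω | (0:ℝ) ≤ τ ω} = Set.univ := Set.eq_univ_of_forall fun ω => hτnonneg ω
    rw [this]
    exact @MeasurableSet.univ Ω (sigmaPast 𝔾t (fun _ => (0:ℝ)))
  · have hcompl : {ω : Ω | t ≤ τ ω} = {ω : Ω | τ ω < t}ᶜ := by
      ext ω; simp [not_lt]
    rw [hcompl, tau_lt_iUnion ht]
    refine MeasurableSet.compl (MeasurableSet.iUnion fun n => ?_)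
    have hlt : t - t / ((n:ℝ) + 1) < t := by
      have : 0 < t / ((n:ℝ) + 1) := by positivity
      linarith
    refine measurableSet_sigmaPast_of_lt hlt ?_
    rw [h𝔾t]
    exact (le_sup_right : deathSigma τ _ ≤ _) _
      (MeasurableSpace.measurableSet_generateFrom ⟨t - t / (n + 1), le_rfl, rfl⟩)

/-- The σ-algebra of sets whose trace on `D` agrees a.e. with the trace of a `ℬ`-set. -/
def aeTraceSigma (P : Measure Ω) (ℬ : MeasurableSpace Ω) (D : Set Ω) : MeasurableSpace Ω where
  MeasurableSet' A := ∃ B : Set Ω, MeasurableSet[ℬ] B ∧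
    ((A ∩ D : Set Ω) : Set Ω) =ᵐ[P] (B ∩ D : Set Ω)
  measurableSet_empty := ⟨∅, @MeasurableSet.empty Ω ℬ, EventuallyEq.refl _ _⟩
  measurableSet_compl := by
    rintro A ⟨B, hB, hAB⟩
    refine ⟨Bᶜ, hB.compl, ?_⟩
    rw [Filter.eventuallyEq_set] at hAB ⊢
    filter_upwards [hAB] with ω hω
    simp only [Set.mem_inter_iff, Set.mem_compl_iff] at hω ⊢
    tauto
  measurableSet_iUnion := by
    intro f hf
    choose B hB hAB using hf
    refine ⟨⋃ n, B n, MeasurableSet.iUnion hB, ?_⟩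
    simp only [Filter.eventuallyEq_set] at hAB ⊢
    filter_upwards [ae_all_iff.2 hAB] with ω hω
    simp only [Set.mem_inter_iff, Set.mem_iUnion] at hω ⊢
    constructor
    · rintro ⟨⟨n, hn⟩, hD⟩
      exact ⟨⟨n, ((hω n).1 ⟨hn, hD⟩).1⟩, hD⟩
    · rintro ⟨⟨n, hn⟩, hD⟩
      exact ⟨⟨n, ((hω n).2 ⟨hn, hD⟩).1⟩, hD⟩

/-- The trace of `𝔾ₜ₋` on `{τ ≥ t}` coincides (up to null sets) with the trace of `ℱˢₜ₋`. -/
lemma trace_lemma (P : Measure Ω) {ℱS 𝔾t : Filtration ℝ m0} {τ : Ω → ℝ}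
    (h𝔾t : ∀ s : ℝ, (𝔾t s : MeasurableSpace Ω) = (ℱS s : MeasurableSpace Ω) ⊔ deathSigma τ s)
    {t : ℝ} (hτ0 : P {ω : Ω | τ ω ≤ 0} = 0) :
    ∀ A : Set Ω, MeasurableSet[sigmaPast 𝔾t (fun _ => t)] A →
      ∃ B : Set Ω, MeasurableSet[sigmaPast ℱS (fun _ => t)] B ∧
        ((A ∩ {ω | t ≤ τ ω} : Set Ω) : Set Ω) =ᵐ[P] (B ∩ {ω | t ≤ τ ω} : Set Ω) := by
  set D : Set Ω := {ω | t ≤ τ ω}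
  have hdeath : ∀ s : ℝ, (s < t ∨ s ≤ 0) → deathSigma τ s ≤ aeTraceSigma P (sigmaPast ℱS (fun _ => t)) D := by
    intro s hs
    refine MeasurableSpace.generateFrom_le ?_
    rintro A ⟨r, hr, rfl⟩
    by_cases hrt : r < t
    · refine ⟨∅, @MeasurableSet.empty Ω (sigmaPast ℱS fun _ => t), ?_⟩
      have h1 : ({ω : Ω | τ ω ≤ r} ∩ D : Set Ω) = ∅ := by
        ext ω
        simp only [Set.mem_inter_iff, Set.mem_setOf_eq, Set.mem_empty_iff_false, iff_false, D,
          not_and]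
        intro h1 h2
        exact absurd (le_trans h2 h1) (not_le.2 hrt)
      rw [h1, Set.empty_inter]
      exact EventuallyEq.rfl
    · -- then r ≤ 0, so the set is null
      have hr0 : r ≤ 0 := by
        rcases hs with h | h
        · exact absurd (lt_of_le_of_lt hr h) hrt
        · exact le_trans hr h
      refine ⟨∅, @MeasurableSet.empty Ω (sigmaPast ℱS fun _ => t), ?_⟩
      have hnull : P ({ω : Ω | τ ω ≤ r} ∩ D) = 0 := by
        refine measure_mono_null ?_ hτ0
        intro ω hω
        exact le_trans hω.1 hr0
      rw [Set.empty_inter]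
      exact (MeasureTheory.ae_eq_empty).2 hnull
  have hFS : ∀ s : ℝ, (s < t ∨ s ≤ 0) → (ℱS s : MeasurableSpace Ω) ≤ aeTraceSigma P (sigmaPast ℱS (fun _ => t)) D := by
    intro s hs A hA
    rcases hs with h | h
    · exact ⟨A, measurableSet_sigmaPast_of_lt h hA, EventuallyEq.refl _ _⟩
    · exact ⟨A, measurableSet_sigmaPast_zero (ℱS.mono h A hA), EventuallyEq.refl _ _⟩
  have h𝔾le : ∀ s : ℝ, (s < t ∨ s ≤ 0) → (𝔾t s : MeasurableSpace Ω) ≤ aeTraceSigma P (sigmaPast ℱS (fun _ => t)) D := by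
    intro s hs
    rw [h𝔾t s]
    exact sup_le (hFS s hs) (hdeath s hs)
  have hfin : sigmaPast 𝔾t (fun _ => t) ≤ aeTraceSigma P (sigmaPast ℱS (fun _ => t)) D := by
    refine sup_le (h𝔾le 0 (Or.inr le_rfl)) (MeasurableSpace.generateFrom_le ?_)
    rintro S ⟨s, A, hA, rfl⟩
    by_cases h : s < t
    · have h1 : A ∩ {ω : Ω | s < t} = A := by simp [h]
      rw [h1]
      exact h𝔾le s (Or.inl h) A hA
    · have h1 : A ∩ {ω : Ω | s < t} = ∅ := by simp [h]
      rw [h1]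
      exact @MeasurableSet.empty Ω (aeTraceSigma P (sigmaPast ℱS (fun _ => t)) D)
  exact fun A hA => hfin A hA

lemma predictableSigma_le_prod (ℱ : Filtration ℝ m0) :
    predictableSigma ℱ ≤ (Prod.instMeasurableSpace : MeasurableSpace (ℝ × Ω)) := by
  refine MeasurableSpace.generateFrom_le ?_
  rintro S (⟨u, v, A, huv, hA, rfl⟩ | ⟨A, hA, rfl⟩)
  · exact measurableSet_Ioc.prod (ℱ.le u A hA)
  · exact (measurableSet_singleton 0).prod (ℱ.le 0 A hA)

lemma IsPredictable.measurable_section {ℱ : Filtration ℝ m0} {γ : ℝ → Ω → ℝ}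
    (hγ : IsPredictable ℱ γ) (ω : Ω) : Measurable fun u => γ u ω := by
  have hjoint : Measurable fun p : ℝ × Ω => γ p.1 p.2 := fun b hb =>
    predictableSigma_le_prod ℱ _ (hγ hb)
  exact hjoint.comp (measurable_id.prodMk measurable_const)

lemma aux_toReal_tendsto_atTop {f : ℕ → ℝ≥0∞} (h : Tendsto f atTop (nhds ∞))
    (hf : ∀ n, f n ≠ ∞) : Tendsto (fun n => (f n).toReal) atTop atTop := by
  rw [tendsto_atTop]
  intro M
  filter_upwards [h.eventually (lt_mem_nhds (show ENNReal.ofReal M < ∞ from ENNReal.ofReal_lt_top))]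
    with n hn
  rcases le_or_gt M 0 with hM | hM
  · exact hM.trans ENNReal.toReal_nonneg
  · calc M = (ENNReal.ofReal M).toReal := (ENNReal.toReal_ofReal hM.le).symm
      _ ≤ (f n).toReal := ENNReal.toReal_mono (hf n) hn.le

/-- KEY LEMMA: the conditional expectation of `1_{τ ≥ t}` given the strict past equals the
survival process `e^{-∫_0^t γ}`. -/
lemma keyB (P : Measure Ω) [IsProbabilityMeasure P] (ℱ : Filtration ℝ m0) {T : ℝ}
    (τ : Ω → ℝ) (hτmeas : Measurable τ) (hτnonneg : ∀ ω, 0 ≤ τ ω)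
    (γ : ℝ → Ω → ℝ) (hγpred : IsPredictable ℱ γ) (hγ0 : ∀ t ω, 0 ≤ γ t ω)
    (hsurv : ∀ t ∈ Set.Icc (0:ℝ) T,
      P[(fun ω => if t < τ ω then (1:ℝ) else 0) | ℱ t]
        =ᵐ[P] fun ω => Real.exp (-∫ u in Set.Ioc (0:ℝ) t, γ u ω))
    {t : ℝ} (ht : t ∈ Set.Icc (0:ℝ) T) :
    (fun ω => Real.exp (-∫ u in Set.Ioc (0:ℝ) t, γ u ω))
      =ᵐ[P] P[(fun ω => if t ≤ τ ω then (1:ℝ) else 0) | preSigma ℱ t] := by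
  classical
  have hm : preSigma ℱ t ≤ m0 := preSigma_le ℱ t
  haveI : SigmaFinite (P.trim hm) := by infer_instance
  set G : Ω → ℝ := fun ω => Real.exp (-∫ u in Set.Ioc (0:ℝ) t, γ u ω) with hGdef
  set d : Ω → ℝ := fun ω => if t ≤ τ ω then (1:ℝ) else 0 with hddef
  -- basic integrability and measurability
  have hind_le_meas : ∀ a : ℝ, Measurable fun ω => if a ≤ τ ω then (1:ℝ) else 0 := fun a =>
    Measurable.ite (hτmeas measurableSet_Ici) measurable_const measurable_const
  have hind_lt_meas : ∀ a : ℝ, Measurable fun ω => if a < τ ω then (1:ℝ) else 0 := fun a =>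
    Measurable.ite (hτmeas measurableSet_Ioi) measurable_const measurable_const
  have hind_le_int : ∀ a : ℝ, Integrable (fun ω => if a ≤ τ ω then (1:ℝ) else 0) P := by
    intro a
    refine Integrable.mono' (integrable_const 1) (hind_le_meas a).aestronglyMeasurable ?_
    filter_upwards with ω
    by_cases h : a ≤ τ ω <;> simp [h]
  have hind_lt_int : ∀ a : ℝ, Integrable (fun ω => if a < τ ω then (1:ℝ) else 0) P := by
    intro a
    refine Integrable.mono' (integrable_const 1) (hind_lt_meas a).aestronglyMeasurable ?_
    filter_upwards with ω
    by_cases h : a < τ ω <;> simp [h]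
  have hd_int : Integrable d P := hind_le_int t
  have hexp_nonneg : ∀ (s : ℝ) (ω : Ω), (0:ℝ) ≤ ∫ u in Set.Ioc (0:ℝ) s, γ u ω := fun s ω =>
    integral_nonneg fun u => hγ0 u ω
  have hexp_le_one : ∀ (s : ℝ) (ω : Ω), Real.exp (-∫ u in Set.Ioc (0:ℝ) s, γ u ω) ≤ 1 := by
    intro s ω
    rw [Real.exp_le_one_iff]
    linarith [hexp_nonneg s ω]
  have hexp_meas : ∀ s : ℝ, Measurable fun ω => Real.exp (-∫ u in Set.Ioc (0:ℝ) s, γ u ω) := by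
    intro s
    exact Real.measurable_exp.comp
      (((hγpred.measurable_intIoc s).mono (preSigma_le ℱ s) le_rfl).neg)
  have hexp_int : ∀ s : ℝ, Integrable (fun ω => Real.exp (-∫ u in Set.Ioc (0:ℝ) s, γ u ω)) P := by
    intro s
    refine Integrable.mono' (integrable_const 1) (hexp_meas s).aestronglyMeasurable ?_
    filter_upwards with ω
    rw [Real.norm_eq_abs, abs_of_pos (Real.exp_pos _)]
    exact hexp_le_one s ω
  have hG_int : Integrable G P := hexp_int t
  have hG_meas_m : Measurable[preSigma ℱ t] G :=
    Real.measurable_exp.comp ((hγpred.measurable_intIoc t).neg)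
  -- the t = 0 case is trivial
  rcases eq_or_lt_of_le ht.1 with rfl | htpos
  · have hdeq : d = fun _ : Ω => (1:ℝ) := funext fun ω => if_pos (hτnonneg ω)
    rw [hdeq, condExp_const hm]
    filter_upwards with ω
    simp [G, Set.Ioc_self]
  -- now 0 < t
  set r : ℕ → ℝ := fun n => t - t / (n + 1) with hrdef
  have hr0 : ∀ n : ℕ, 0 ≤ r n := by
    intro n
    have h1 : t / ((n:ℝ) + 1) ≤ t := div_le_self htpos.le (by push_cast; linarith)
    simp only [r]
    linarith
  have hrt : ∀ n : ℕ, r n < t := by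
    intro n
    have : (0:ℝ) < t / ((n:ℝ) + 1) := by positivity
    simp only [r]
    linarith
  have hrmono : Monotone r := by
    intro a b hab
    have hc : ((a:ℝ) + 1) ≤ ((b:ℝ) + 1) := by exact_mod_cast Nat.succ_le_succ hab
    have h2 : t / ((b:ℝ)+1) ≤ t / ((a:ℝ)+1) := by
      rw [div_le_div_iff₀ (by positivity) (by positivity)]
      nlinarith
    simp only [r]; linarith
  have hrtend : Tendsto r atTop (nhds t) := by
    have h1 : Tendsto (fun n : ℕ => t * (1 / ((n:ℝ) + 1))) atTop (nhds (t * 0)) :=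
      tendsto_const_nhds.mul tendsto_one_div_add_atTop_nhds_zero_nat
    have h2 : Tendsto (fun n : ℕ => t - t * (1 / ((n:ℝ) + 1))) atTop (nhds (t - t * 0)) :=
      tendsto_const_nhds.sub h1
    simp only [mul_zero, sub_zero] at h2
    refine h2.congr fun n => ?_
    simp only [r]; ring
  have hrmem : ∀ n, r n ∈ Set.Icc (0:ℝ) T := fun n => ⟨hr0 n, (hrt n).le.trans ht.2⟩
  set Gs : ℕ → Ω → ℝ := fun n ω => Real.exp (-∫ u in Set.Ioc (0:ℝ) (r n), γ u ω) with hGsdef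
  have hIocU : (⋃ n, Set.Ioc (0:ℝ) (r n)) = Set.Ioo 0 t := by
    ext x
    simp only [Set.mem_iUnion, Set.mem_Ioc, Set.mem_Ioo]
    constructor
    · rintro ⟨n, h1, h2⟩
      exact ⟨h1, lt_of_le_of_lt h2 (hrt n)⟩
    · rintro ⟨h1, h2⟩
      obtain ⟨n, hn⟩ := (hrtend.eventually_const_le h2).exists
      exact ⟨n, h1, hn⟩
  have hIocMono : Monotone fun n => Set.Ioc (0:ℝ) (r n) := fun a b hab =>
    Set.Ioc_subset_Ioc_right (hrmono hab)
  -- pointwise limit of the approximating survival processes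
  set H : Ω → ℝ := fun ω =>
    if IntegrableOn (fun u => γ u ω) (Set.Ioc 0 t) volume then G ω
    else if ∀ n, IntegrableOn (fun u => γ u ω) (Set.Ioc 0 (r n)) volume then 0 else 1
    with hHdef
  have hlim : ∀ ω, Tendsto (fun n => Gs n ω) atTop (nhds (H ω)) := by
    intro ω
    by_cases hInt : IntegrableOn (fun u => γ u ω) (Set.Ioc 0 t) volume
    · have h1 : Tendsto (fun n => ∫ u in Set.Ioc (0:ℝ) (r n), γ u ω) atTop
          (nhds (∫ u in ⋃ n, Set.Ioc (0:ℝ) (r n), γ u ω)) :=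
        tendsto_setIntegral_of_monotone (fun n => measurableSet_Ioc) hIocMono
          (by rw [hIocU]; exact hInt.mono_set Set.Ioo_subset_Ioc_self)
      rw [hIocU] at h1
      have h2 : (∫ u in Set.Ioo (0:ℝ) t, γ u ω) = ∫ u in Set.Ioc (0:ℝ) t, γ u ω :=
        (integral_Ioc_eq_integral_Ioo).symm
      rw [h2] at h1
      have h3 := (Real.continuous_exp.tendsto _).comp h1.neg
      have hHval : H ω = G ω := by simp only [H]; rw [if_pos hInt]
      rw [hHval]
      exact h3
    · by_cases hall : ∀ n, IntegrableOn (fun u => γ u ω) (Set.Ioc 0 (r n)) volume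
      · -- integrals blow up, exp → 0
        set ν : Measure ℝ := volume.withDensity fun u => ENNReal.ofReal (γ u ω) with hνdef
        have hofReal_meas : Measurable fun u => ENNReal.ofReal (γ u ω) :=
          ENNReal.measurable_ofReal.comp (hγpred.measurable_section ω)
        have hν_apply : ∀ s : Set ℝ, MeasurableSet s → ν s = ∫⁻ u in s, ENNReal.ofReal (γ u ω) :=
          fun s hs => withDensity_apply _ hs
        have hlint : ∀ s : Set ℝ, MeasurableSet s →
            (∫⁻ u in s, (‖γ u ω‖₊ : ℝ≥0∞)) = ∫⁻ u in s, ENNReal.ofReal (γ u ω) := by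
          intro s hs
          refine lintegral_congr fun u => ?_
          exact Real.enorm_eq_ofReal (hγ0 u ω)
        have hν_fin : ∀ n, ν (Set.Ioc (0:ℝ) (r n)) ≠ ∞ := by
          intro n
          rw [hν_apply _ measurableSet_Ioc, ← hlint _ measurableSet_Ioc]
          exact ((hall n).2).ne
        have hν_eq : ∀ n, (∫ u in Set.Ioc (0:ℝ) (r n), γ u ω) = (ν (Set.Ioc 0 (r n))).toReal := by
          intro n
          rw [integral_eq_lintegral_of_nonneg_ae (Filter.Eventually.of_forall fun u => hγ0 u ω)
            (hγpred.measurable_section ω).aestronglyMeasurable, hν_apply _ measurableSet_Ioc]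
        have hνIoc_top : ν (Set.Ioc (0:ℝ) t) = ∞ := by
          rw [hν_apply _ measurableSet_Ioc, ← hlint _ measurableSet_Ioc]
          by_contra hne
          exact hInt ⟨(hγpred.measurable_section ω).aestronglyMeasurable.restrict,
            lt_top_iff_ne_top.2 hne⟩
        have hνIoo_top : ν (Set.Ioo (0:ℝ) t) = ∞ := by
          have hsub : ν (Set.Ioc (0:ℝ) t) ≤ ν (Set.Ioo 0 t) + ν {t} := by
            refine le_trans (measure_mono ?_) (measure_union_le _ _)
            intro x hx
            rcases lt_or_eq_of_le hx.2 with h | h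
            · exact Or.inl ⟨hx.1, h⟩
            · exact Or.inr (by simp [h])
          have hsingle : ν {t} = 0 :=
            (withDensity_absolutelyContinuous volume _) (Real.volume_singleton)
          rw [hsingle, add_zero, hνIoc_top] at hsub
          exact top_le_iff.1 hsub
        have hνtend : Tendsto (fun n => ν (Set.Ioc (0:ℝ) (r n))) atTop (nhds ∞) := by
          have := tendsto_measure_iUnion_atTop (μ := ν) hIocMono
          rwa [hIocU, hνIoo_top] at this
        have hbig : Tendsto (fun n => ∫ u in Set.Ioc (0:ℝ) (r n), γ u ω) atTop atTop := by
          have := aux_toReal_tendsto_atTop hνtend hν_fin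
          exact this.congr fun n => (hν_eq n).symm
        have h0 : Tendsto (fun n => Gs n ω) atTop (nhds 0) := by
          have hneg : Tendsto (fun n => -∫ u in Set.Ioc (0:ℝ) (r n), γ u ω) atTop atBot :=
            tendsto_neg_atTop_atBot.comp hbig
          exact Real.tendsto_exp_atBot.comp hneg
        have hHval : H ω = 0 := by simp only [H]; rw [if_neg hInt, if_pos hall]
        rwa [hHval]
      · -- eventually the integrals are undefined, hence `Gs n ω = 1`
        push_neg at hall
        obtain ⟨n₀, hn₀⟩ := hall
        have hev : ∀ᶠ n in atTop, Gs n ω = 1 := by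
          filter_upwards [eventually_ge_atTop n₀] with n hn
          have hnint : ¬ IntegrableOn (fun u => γ u ω) (Set.Ioc 0 (r n)) volume := by
            intro hc
            exact hn₀ (hc.mono_set (hIocMono hn))
          simp only [Gs]
          rw [integral_undef hnint, neg_zero, Real.exp_zero]
        have h1 : Tendsto (fun n => Gs n ω) atTop (nhds 1) :=
          Tendsto.congr' (by filter_upwards [hev] with n hn; exact hn.symm) tendsto_const_nhds
        have hHval : H ω = 1 := by
          simp only [H]
          rw [if_neg hInt, if_neg]
          push_neg
          exact ⟨n₀, hn₀⟩
        rwa [hHval]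
  -- set-integral identity on the generating π-system
  have hbasic : ∀ A : Set Ω, (∃ s : ℝ, (s < t ∨ s ≤ 0) ∧ MeasurableSet[ℱ s] A) →
      ∫ ω in A, d ω ∂P = ∫ ω in A, H ω ∂P := by
    rintro A ⟨s, hs, hA⟩
    have hAm0 : MeasurableSet A := ℱ.le s A hA
    -- eventually `s ≤ r n`
    have hsle : ∀ᶠ n in atTop, s ≤ r n := by
      rcases hs with h | h
      · exact hrtend.eventually_const_le h
      · exact Filter.Eventually.of_forall fun n => h.trans (hr0 n)
    have key_n : ∀ᶠ n in atTop,
        ∫ ω in A, (if r n < τ ω then (1:ℝ) else 0) ∂P = ∫ ω in A, Gs n ω ∂P := by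
      filter_upwards [hsle] with n hn
      have hA' : MeasurableSet[ℱ (r n)] A := ℱ.mono hn A hA
      have h1 : ∫ ω in A, (if r n < τ ω then (1:ℝ) else 0) ∂P =
          ∫ ω in A, (P[(fun ω => if r n < τ ω then (1:ℝ) else 0) | ℱ (r n)]) ω ∂P :=
        (setIntegral_condExp (ℱ.le (r n)) (hind_lt_int (r n)) hA').symm
      rw [h1]
      exact setIntegral_congr_ae (ℱ.le (r n) A hA') ((hsurv (r n) (hrmem n)).mono
        fun ω hω _ => hω)
    have limit1 : Tendsto (fun n => ∫ ω in A, (if r n < τ ω then (1:ℝ) else 0) ∂P) atTop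
        (nhds (∫ ω in A, d ω ∂P)) := by
      refine tendsto_integral_of_dominated_convergence (fun _ => (1:ℝ))
        (fun n => (hind_lt_meas (r n)).aestronglyMeasurable.restrict)
        (integrable_const 1) (fun n => ?_) ?_
      · filter_upwards with ω
        by_cases h : r n < τ ω <;> simp [h]
      · filter_upwards with ω
        by_cases h : t ≤ τ ω
        · have : ∀ n, (if r n < τ ω then (1:ℝ) else 0) = 1 := fun n =>
            if_pos (lt_of_lt_of_le (hrt n) h)
          simp only [d, if_pos h]
          exact Tendsto.congr (fun n => (this n).symm) tendsto_const_nhds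
        · push_neg at h
          have hev : ∀ᶠ n in atTop, (if r n < τ ω then (1:ℝ) else 0) = 0 := by
            filter_upwards [hrtend.eventually_const_le h] with n hn
            exact if_neg (not_lt.2 hn)
          simp only [d, if_neg (not_le.2 h)]
          exact Tendsto.congr' (by filter_upwards [hev] with n hn; exact hn.symm)
            tendsto_const_nhds
    have limit2 : Tendsto (fun n => ∫ ω in A, Gs n ω ∂P) atTop
        (nhds (∫ ω in A, H ω ∂P)) := by
      refine tendsto_integral_of_dominated_convergence (fun _ => (1:ℝ))
        (fun n => (hexp_meas (r n)).aestronglyMeasurable.restrict)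
        (integrable_const 1) (fun n => ?_) ?_
      · filter_upwards with ω
        rw [Real.norm_eq_abs, abs_of_pos (Real.exp_pos _)]
        exact hexp_le_one (r n) ω
      · exact Filter.Eventually.of_forall fun ω => hlim ω
    have limit1' : Tendsto (fun n => ∫ ω in A, Gs n ω ∂P) atTop
        (nhds (∫ ω in A, d ω ∂P)) := Tendsto.congr' key_n limit1
    exact tendsto_nhds_unique limit1' limit2
  -- identify H with G almost everywhere
  have hH_asm : AEStronglyMeasurable H P :=
    aestronglyMeasurable_of_tendsto_ae atTop
      (fun n => (hexp_meas (r n)).aestronglyMeasurable)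
      (Filter.Eventually.of_forall hlim)
  have hH_bound : ∀ ω, ‖H ω‖ ≤ 1 := by
    intro ω
    simp only [H]
    split_ifs with h1 h2
    · rw [Real.norm_eq_abs, abs_of_pos (Real.exp_pos _)]
      exact hexp_le_one t ω
    · simp
    · simp
  have hH_int : Integrable H P :=
    Integrable.mono' (integrable_const 1) hH_asm (Filter.Eventually.of_forall hH_bound)
  have hHG : H =ᵐ[P] G := by
    have hGH_nonneg : ∀ ω, 0 ≤ G ω - H ω := by
      intro ω
      simp only [H]
      split_ifs with h1 h2
      · simp
      · simp [G, Real.exp_nonneg]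
      · -- here ¬IntegrableOn on Ioc 0 t, so the Bochner integral is zero and G ω = 1
        have : (∫ u in Set.Ioc (0:ℝ) t, γ u ω) = 0 := integral_undef h1
        simp only [G, this, neg_zero, Real.exp_zero]
        norm_num
    have h1 : ∫ ω, d ω ∂P = ∫ ω, H ω ∂P := by
      have := hbasic Set.univ ⟨0, Or.inr le_rfl, MeasurableSet.univ⟩
      simpa [setIntegral_univ] using this
    have h2 : ∫ ω, (if t < τ ω then (1:ℝ) else 0) ∂P = ∫ ω, G ω ∂P := by
      have hc := hsurv t ht
      have h3 : ∫ ω, (if t < τ ω then (1:ℝ) else 0) ∂P =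
          ∫ ω, (P[(fun ω => if t < τ ω then (1:ℝ) else 0) | ℱ t]) ω ∂P :=
        (integral_condExp (ℱ.le t)).symm
      rw [h3]
      exact integral_congr_ae hc
    have h4 : ∫ ω, (G ω - H ω) ∂P ≤ 0 := by
      have hsub1 : ∫ ω, (G ω - H ω) ∂P = ∫ ω, G ω ∂P - ∫ ω, H ω ∂P :=
        integral_sub hG_int hH_int
      have h5 : ∫ ω, ((if t < τ ω then (1:ℝ) else 0) - d ω) ∂P ≤ 0 := by
        refine integral_nonpos fun ω => ?_
        simp only [d, Pi.zero_apply]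
        by_cases h : t ≤ τ ω
        · by_cases h' : t < τ ω <;> simp [h, h']
        · have h' : ¬ t < τ ω := fun hc => h hc.le
          simp [h, h']
      have hsub2 : ∫ ω, ((if t < τ ω then (1:ℝ) else 0) - d ω) ∂P =
          ∫ ω, (if t < τ ω then (1:ℝ) else 0) ∂P - ∫ ω, d ω ∂P :=
        integral_sub (hind_lt_int t) hd_int
      rw [hsub1, ← h2, ← h1]
      rw [hsub2] at h5
      linarith
    have h6 : ∫ ω, (G ω - H ω) ∂P = 0 :=
      le_antisymm h4 (integral_nonneg hGH_nonneg)
    have h7 : (fun ω => G ω - H ω) =ᵐ[P] 0 :=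
      (integral_eq_zero_iff_of_nonneg hGH_nonneg (hG_int.sub hH_int)).1 h6
    filter_upwards [h7] with ω hω
    have : G ω - H ω = 0 := hω
    linarith
  -- the set-integral identity on the π-system, with `G` in place of `H`
  have hbasicG : ∀ A : Set Ω, (∃ s : ℝ, (s < t ∨ s ≤ 0) ∧ MeasurableSet[ℱ s] A) →
      ∫ ω in A, d ω ∂P = ∫ ω in A, G ω ∂P := by
    rintro A hA
    rw [hbasic A hA]
    exact setIntegral_congr_ae (ℱ.le _ _ hA.choose_spec.2) (hHG.mono fun ω hω _ => hω)
  -- extend to the whole σ-algebra by the π-λ theorem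
  have hall_sets : ∀ A : Set Ω, MeasurableSet[preSigma ℱ t] A →
      ∫ ω in A, d ω ∂P = ∫ ω in A, G ω ∂P := by
    have htot : ∫ ω, d ω ∂P = ∫ ω, G ω ∂P := by
      have := hbasicG Set.univ ⟨0, Or.inr le_rfl, MeasurableSet.univ⟩
      simpa [setIntegral_univ] using this
    refine MeasurableSpace.induction_on_inter (m := preSigma ℱ t)
      (C := fun A _ => ∫ ω in A, d ω ∂P = ∫ ω in A, G ω ∂P)
      (s := {A : Set Ω | ∃ s : ℝ, (s < t ∨ s ≤ 0) ∧ MeasurableSet[ℱ s] A})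
      rfl (isPiSystem_preSigma ℱ t) (by simp) (fun A hA => hbasicG A hA)
      ?_ ?_
    · intro A hAm hA
      have hAm0 : MeasurableSet A := hm A hAm
      have e1 := integral_add_compl hAm0 hd_int
      have e2 := integral_add_compl hAm0 hG_int
      linarith
    · intro f hdisj hfm hf
      have hfm0 : ∀ i, MeasurableSet (f i) := fun i => hm _ (hfm i)
      rw [integral_iUnion hfm0 hdisj hd_int.integrableOn,
        integral_iUnion hfm0 hdisj hG_int.integrableOn]
      exact tsum_congr hf
  -- conclude by uniqueness of conditional expectation
  exact ae_eq_condExp_of_forall_setIntegral_eq hm hd_int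
    (fun s _ _ => hG_int.integrableOn)
    (fun s hs _ => (hall_sets s hs).symm)
    (StronglyMeasurable.aestronglyMeasurable hG_meas_m.stronglyMeasurable)

/-- for an `ℱ`-predictable process `Y`, the predictable projection formula
becomes `1_{τ ≥ t} (ᵖ׳ᴳ̃Y)_t = 1_{τ ≥ t} ᵖ׳ᶠˢ(Y_t e^{-∫_0^t γ}) / ᵖ׳ᶠˢ(e^{-∫_0^t γ})`. -/
theorem predictable_projection_hazard_formula
    (P : Measure Ω) [IsProbabilityMeasure P]
    (ℱ : Filtration ℝ m0) (T : ℝ) (hT : 0 < T)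
    (τ : Ω → ℝ) (hτmeas : Measurable τ) (hτnonneg : ∀ ω, 0 ≤ τ ω)
    (ℱS 𝔾t : Filtration ℝ m0)
    (hFsubF : ∀ t : ℝ, (ℱS t : MeasurableSpace Ω) ≤ (ℱ t : MeasurableSpace Ω))
    (h𝔾t : ∀ t : ℝ, (𝔾t t : MeasurableSpace Ω) = (ℱS t : MeasurableSpace Ω) ⊔ deathSigma τ t)
    (γ : ℝ → Ω → ℝ) (hγpred : IsPredictable ℱ γ) (hγ0 : ∀ t ω, 0 ≤ γ t ω)
    (hγint : Integrable (fun ω => ∫ u in Set.Ioc (0:ℝ) T, γ u ω) P)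
    -- the survival process: P(τ > t | ℱ_t) = e^{-∫_0^t γ_u du}
    (hsurv : ∀ t ∈ Set.Icc (0:ℝ) T,
      P[(fun ω => if t < τ ω then (1:ℝ) else 0) | ℱ t]
        =ᵐ[P] fun ω => Real.exp (-∫ u in Set.Ioc (0:ℝ) t, γ u ω))
    (Y : ℝ → Ω → ℝ) (hYpred : IsPredictable ℱ Y)
    (hYint : ∀ t ∈ Set.Icc (0:ℝ) T, Integrable (Y t) P)
    (Z₁ Z₂ Z₃ : ℝ → Ω → ℝ)
    (hZ₁ : IsPredProj P 𝔾t Y Z₁)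
    (hZ₂ : IsPredProj P ℱS
      (fun t ω => Y t ω * Real.exp (-∫ u in Set.Ioc (0:ℝ) t, γ u ω)) Z₂)
    (hZ₃ : IsPredProj P ℱS
      (fun t ω => Real.exp (-∫ u in Set.Ioc (0:ℝ) t, γ u ω)) Z₃)
    (hZ₃pos : ∀ t ∈ Set.Icc (0:ℝ) T, ∀ᵐ ω ∂P, 0 < Z₃ t ω) :
    ∀ t ∈ Set.Icc (0:ℝ) T, ∀ᵐ ω ∂P, t ≤ τ ω → Z₁ t ω = Z₂ t ω / Z₃ t ω := by
  classical
  intro t ht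
  -- notation
  set D : Set Ω := {ω | t ≤ τ ω} with hDdef
  set d : Ω → ℝ := fun ω => if t ≤ τ ω then (1:ℝ) else 0 with hddef
  set G : Ω → ℝ := fun ω => Real.exp (-∫ u in Set.Ioc (0:ℝ) t, γ u ω) with hGdef
  have hm : preSigma ℱ t ≤ m0 := preSigma_le ℱ t
  have h𝒢0 : sigmaPast 𝔾t (fun _ => t) ≤ m0 := sigmaPast_const_le 𝔾t t
  have hℬ0 : sigmaPast ℱS (fun _ => t) ≤ m0 := sigmaPast_const_le ℱS t
  have hℬm : sigmaPast ℱS (fun _ => t) ≤ preSigma ℱ t := sigmaPast_const_le_preSigma hFsubF t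
  have hℬ𝒢 : sigmaPast ℱS (fun _ => t) ≤ sigmaPast 𝔾t (fun _ => t) :=
    sigmaPast_const_mono (fun s => by rw [h𝔾t s]; exact le_sup_left) _
  haveI : SigmaFinite (P.trim hm) := by infer_instance
  haveI : SigmaFinite (P.trim h𝒢0) := by infer_instance
  haveI : SigmaFinite (P.trim hℬ0) := by infer_instance
  -- τ is a.s. strictly positive
  have hτ0 : P {ω : Ω | τ ω ≤ 0} = 0 := by
    have h0T : (0:ℝ) ∈ Set.Icc (0:ℝ) T := ⟨le_rfl, hT.le⟩
    have hc := hsurv 0 h0T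
    have hint : Integrable (fun ω => if (0:ℝ) < τ ω then (1:ℝ) else 0) P := by
      refine Integrable.mono' (integrable_const 1)
        (Measurable.ite (hτmeas measurableSet_Ioi) measurable_const
          measurable_const).aestronglyMeasurable ?_
      filter_upwards with ω; by_cases h : (0:ℝ) < τ ω <;> simp [h]
    have h1 : ∫ ω, (if (0:ℝ) < τ ω then (1:ℝ) else 0) ∂P = 1 := by
      have h2 : ∫ ω, (if (0:ℝ) < τ ω then (1:ℝ) else 0) ∂P =
          ∫ ω, (P[(fun ω => if (0:ℝ) < τ ω then (1:ℝ) else 0) | ℱ 0]) ω ∂P :=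
        (integral_condExp (ℱ.le 0)).symm
      rw [h2, integral_congr_ae hc]
      have : ∀ ω : Ω, Real.exp (-∫ u in Set.Ioc (0:ℝ) 0, γ u ω) = 1 := by
        intro ω; simp [Set.Ioc_self]
      simp only [this]
      simp
    have hS : MeasurableSet {ω : Ω | (0:ℝ) < τ ω} := hτmeas measurableSet_Ioi
    have h3 : ∫ ω, (if (0:ℝ) < τ ω then (1:ℝ) else 0) ∂P =
        (P {ω : Ω | (0:ℝ) < τ ω}).toReal := by
      change _ = P.real {ω : Ω | (0:ℝ) < τ ω}
      rw [← integral_indicator_one hS]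
      refine integral_congr_ae (Filter.Eventually.of_forall fun ω => ?_)
      by_cases h : (0:ℝ) < τ ω <;> simp [Set.indicator_apply, h]
    have h4 : P {ω : Ω | (0:ℝ) < τ ω} = 1 := by
      rw [h3] at h1
      exact (ENNReal.toReal_eq_one_iff _).1 h1
    have h5 : {ω : Ω | τ ω ≤ 0} = {ω : Ω | (0:ℝ) < τ ω}ᶜ := by
      ext ω; simp [not_lt]
    rw [h5, prob_compl_eq_one_sub hS, h4, tsub_self]
  -- the key conditional-expectation identity
  have hKB : G =ᵐ[P] P[d | preSigma ℱ t] :=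
    keyB P ℱ τ hτmeas hτnonneg γ hγpred hγ0 hsurv ht
  -- basic measurability / integrability facts
  have hd_meas : Measurable d :=
    Measurable.ite (hτmeas measurableSet_Ici) measurable_const measurable_const
  have hd_meas𝒢 : Measurable[sigmaPast 𝔾t (fun _ => t)] d :=
    Measurable.ite (measurableSet_D h𝔾t hτnonneg ht.1) measurable_const measurable_const
  have hd_abs : ∀ ω, ‖d ω‖ ≤ 1 := by
    intro ω; by_cases h : t ≤ τ ω <;> simp [d, h]
  have hd_int : Integrable d P :=
    Integrable.mono' (integrable_const 1) hd_meas.aestronglyMeasurable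
      (Filter.Eventually.of_forall hd_abs)
  have hDm0 : MeasurableSet D := h𝒢0 _ (measurableSet_D h𝔾t hτnonneg ht.1)
  have hG_nonneg : ∀ ω, 0 ≤ G ω := fun ω => (Real.exp_pos _).le
  have hG_le_one : ∀ ω, G ω ≤ 1 := by
    intro ω
    rw [hGdef, Real.exp_le_one_iff]
    have : (0:ℝ) ≤ ∫ u in Set.Ioc (0:ℝ) t, γ u ω := integral_nonneg fun u => hγ0 u ω
    linarith
  have hG_meas : Measurable G :=
    Real.measurable_exp.comp (((hγpred.measurable_intIoc t).mono hm le_rfl).neg)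
  have hG_int : Integrable G P := by
    refine Integrable.mono' (integrable_const 1) hG_meas.aestronglyMeasurable ?_
    filter_upwards with ω
    rw [Real.norm_eq_abs, abs_of_nonneg (hG_nonneg ω)]
    exact hG_le_one ω
  have hYt_int : Integrable (Y t) P := hYint t ht
  have hYm : Measurable[preSigma ℱ t] (Y t) := hYpred.measurable_slice t
  have hZ₂ℬ : Measurable[sigmaPast ℱS (fun _ => t)] (Z₂ t) :=
    (hZ₂.1.measurable_slice t).mono (preSigma_le_sigmaPast_const ℱS t) le_rfl
  have hZ₃ℬ : Measurable[sigmaPast ℱS (fun _ => t)] (Z₃ t) :=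
    (hZ₃.1.measurable_slice t).mono (preSigma_le_sigmaPast_const ℱS t) le_rfl
  -- projections at the constant time `t`
  have hZ₁c : ∀ᵐ ω ∂P, Z₁ t ω =
      (P[fun ω' => Y t ω' | sigmaPast 𝔾t (fun _ => t)]) ω :=
    hZ₁.2 _ (isPredStoppingTime_const 𝔾t t)
  have hZ₂c : ∀ᵐ ω ∂P, Z₂ t ω =
      (P[fun ω' => Y t ω' * G ω' | sigmaPast ℱS (fun _ => t)]) ω :=
    hZ₂.2 _ (isPredStoppingTime_const ℱS t)
  have hZ₃c : ∀ᵐ ω ∂P, Z₃ t ω =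
      (P[fun ω' => G ω' | sigmaPast ℱS (fun _ => t)]) ω :=
    hZ₃.2 _ (isPredStoppingTime_const ℱS t)
  -- B1 : P[d|ℬ] = Z₃ t a.e.
  have hB1 : P[d | sigmaPast ℱS (fun _ => t)] =ᵐ[P] Z₃ t := by
    have e1 : P[d | sigmaPast ℱS (fun _ => t)]
        =ᵐ[P] P[P[d | preSigma ℱ t] | sigmaPast ℱS (fun _ => t)] :=
      (condExp_condExp_of_le hℬm hm).symm
    have e2 : P[P[d | preSigma ℱ t] | sigmaPast ℱS (fun _ => t)]
        =ᵐ[P] P[G | sigmaPast ℱS (fun _ => t)] := condExp_congr_ae hKB.symm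
    have e3 : P[G | sigmaPast ℱS (fun _ => t)] =ᵐ[P] Z₃ t := by
      filter_upwards [hZ₃c] with ω hω; exact hω.symm
    exact (e1.trans e2).trans e3
  -- pull-out at the strict past of ℱ
  have hYd_int : Integrable (Y t * d) P := by
    refine Integrable.mono' hYt_int.norm
      (((hYm.mono hm le_rfl).mul hd_meas).aestronglyMeasurable) ?_
    filter_upwards with ω
    rw [Pi.mul_apply, norm_mul]
    calc ‖Y t ω‖ * ‖d ω‖ ≤ ‖Y t ω‖ * 1 := by
          exact mul_le_mul_of_nonneg_left (hd_abs ω) (norm_nonneg _)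
      _ = ‖Y t ω‖ := mul_one _
  have hpull : P[Y t * d | preSigma ℱ t] =ᵐ[P] Y t * P[d | preSigma ℱ t] :=
    condExp_mul_of_stronglyMeasurable_left hYm.stronglyMeasurable hYd_int hd_int
  -- B2 : P[Y t * d | ℬ] = Z₂ t a.e.
  have hB2 : P[Y t * d | sigmaPast ℱS (fun _ => t)] =ᵐ[P] Z₂ t := by
    have e1 : P[Y t * d | sigmaPast ℱS (fun _ => t)]
        =ᵐ[P] P[P[Y t * d | preSigma ℱ t] | sigmaPast ℱS (fun _ => t)] :=
      (condExp_condExp_of_le hℬm hm).symm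
    have e2 : P[P[Y t * d | preSigma ℱ t] | sigmaPast ℱS (fun _ => t)]
        =ᵐ[P] P[(fun ω => Y t ω * G ω) | sigmaPast ℱS (fun _ => t)] := by
      refine condExp_congr_ae (hpull.trans ?_)
      filter_upwards [hKB] with ω hω
      rw [Pi.mul_apply, ← hω]
    have e3 : P[(fun ω => Y t ω * G ω) | sigmaPast ℱS (fun _ => t)] =ᵐ[P] Z₂ t := by
      filter_upwards [hZ₂c] with ω hω; exact hω.symm
    exact (e1.trans e2).trans e3
  have hZ₂int : Integrable (Z₂ t) P := integrable_condExp.congr hB2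
  have hZ₃int : Integrable (Z₃ t) P := integrable_condExp.congr hB1
  have hZ₃01 : ∀ᵐ ω ∂P, 0 ≤ Z₃ t ω ∧ Z₃ t ω ≤ 1 := by
    have hnn : (0:Ω → ℝ) ≤ᵐ[P] P[d | sigmaPast ℱS (fun _ => t)] :=
      condExp_nonneg (Filter.Eventually.of_forall fun ω => by
        by_cases h : t ≤ τ ω <;> simp [d, h])
    have hle : P[d | sigmaPast ℱS (fun _ => t)] ≤ᵐ[P] P[(fun _ : Ω => (1:ℝ)) |
        sigmaPast ℱS (fun _ => t)] :=
      condExp_mono hd_int (integrable_const 1) (Filter.Eventually.of_forall fun ω => by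
        by_cases h : t ≤ τ ω <;> simp [d, h])
    rw [condExp_const hℬ0] at hle
    filter_upwards [hnn, hle, hB1] with ω h1 h2 h3
    rw [← h3]
    exact ⟨h1, h2⟩
  -- the main set-integral comparison, on the σ-algebra 𝒢 = sigmaPast 𝔾t
  have hZ₁c' : ∀ᵐ ω ∂P, Z₁ t ω = (P[Y t | sigmaPast 𝔾t (fun _ => t)]) ω := hZ₁c
  set ψ : Ω → ℝ := P[Y t | sigmaPast 𝔾t (fun _ => t)] with hψdef
  have hψ_sm : StronglyMeasurable[sigmaPast 𝔾t (fun _ => t)] ψ := stronglyMeasurable_condExp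
  have hψ_int : Integrable ψ P := integrable_condExp
  set h₁ : Ω → ℝ := fun ω => d ω * (ψ ω * Z₃ t ω) with h₁def
  set h₂ : Ω → ℝ := fun ω => d ω * Z₂ t ω with h₂def
  have h₁_int : Integrable h₁ P := by
    refine Integrable.mono' hψ_int.norm
      ((hd_meas.mul (((hψ_sm.mono h𝒢0).measurable).mul
        (hZ₃ℬ.mono hℬ0 le_rfl))).aestronglyMeasurable) ?_
    filter_upwards [hZ₃01] with ω hZ
    simp only [h₁def, norm_mul]
    calc ‖d ω‖ * (‖ψ ω‖ * ‖Z₃ t ω‖) ≤ 1 * (‖ψ ω‖ * 1) := by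
          refine mul_le_mul (hd_abs ω) ?_ (by positivity) zero_le_one
          refine mul_le_mul_of_nonneg_left ?_ (norm_nonneg _)
          rw [Real.norm_eq_abs, abs_of_nonneg hZ.1]
          exact hZ.2
      _ = ‖ψ ω‖ := by ring
  have h₂_int : Integrable h₂ P := by
    refine Integrable.mono' hZ₂int.norm
      ((hd_meas.mul (hZ₂ℬ.mono hℬ0 le_rfl)).aestronglyMeasurable) ?_
    filter_upwards with ω
    simp only [h₂def, norm_mul]
    calc ‖d ω‖ * ‖Z₂ t ω‖ ≤ 1 * ‖Z₂ t ω‖ :=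
          mul_le_mul_of_nonneg_right (hd_abs ω) (norm_nonneg _)
      _ = ‖Z₂ t ω‖ := one_mul _
  -- indicator reduction
  have hdmul : ∀ (φ : Ω → ℝ) (S : Set Ω),
      ∫ ω in S, d ω * φ ω ∂P = ∫ ω in S ∩ D, φ ω ∂P := by
    intro φ S
    have hind : (fun ω => d ω * φ ω) = D.indicator φ := by
      funext ω
      by_cases h : ω ∈ D
      · have h' : t ≤ τ ω := h
        simp [d, Set.indicator_of_mem h, h']
      · have h' : ¬ t ≤ τ ω := h
        simp [d, Set.indicator_of_notMem h, h']
    rw [hind, setIntegral_indicator hDm0]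
  -- strong measurability w.r.t. 𝒢
  have h₁_sm : StronglyMeasurable[sigmaPast 𝔾t (fun _ => t)] h₁ :=
    hd_meas𝒢.stronglyMeasurable.mul
      (hψ_sm.mul (hZ₃ℬ.mono hℬ𝒢 le_rfl).stronglyMeasurable)
  have h₂_sm : StronglyMeasurable[sigmaPast 𝔾t (fun _ => t)] h₂ :=
    hd_meas𝒢.stronglyMeasurable.mul (hZ₂ℬ.mono hℬ𝒢 le_rfl).stronglyMeasurable
  -- auxiliary integrabilities for pull-outs
  have hφGY_int : Integrable ((fun ω => d ω * Z₃ t ω) * Y t) P := by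
    refine Integrable.mono' hYt_int.norm
      (((hd_meas.mul (hZ₃ℬ.mono hℬ0 le_rfl)).mul
        (hYm.mono hm le_rfl)).aestronglyMeasurable) ?_
    filter_upwards [hZ₃01] with ω hZ
    simp only [Pi.mul_apply, norm_mul]
    calc ‖d ω‖ * ‖Z₃ t ω‖ * ‖Y t ω‖ ≤ 1 * 1 * ‖Y t ω‖ := by
          refine mul_le_mul_of_nonneg_right ?_ (norm_nonneg _)
          refine mul_le_mul (hd_abs ω) ?_ (norm_nonneg _) zero_le_one
          rw [Real.norm_eq_abs, abs_of_nonneg hZ.1]; exact hZ.2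
      _ = ‖Y t ω‖ := by ring
  have hZ₃Yd_int : Integrable (Z₃ t * (Y t * d)) P := by
    refine Integrable.mono' hYt_int.norm
      (((hZ₃ℬ.mono hℬ0 le_rfl).mul ((hYm.mono hm le_rfl).mul
        hd_meas)).aestronglyMeasurable) ?_
    filter_upwards [hZ₃01] with ω hZ
    simp only [Pi.mul_apply, norm_mul]
    calc ‖Z₃ t ω‖ * (‖Y t ω‖ * ‖d ω‖) ≤ 1 * (‖Y t ω‖ * 1) := by
          refine mul_le_mul ?_ (mul_le_mul_of_nonneg_left (hd_abs ω) (norm_nonneg _))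
            (by positivity) zero_le_one
          rw [Real.norm_eq_abs, abs_of_nonneg hZ.1]; exact hZ.2
      _ = ‖Y t ω‖ := by ring
  have hZ₂d_int : Integrable (Z₂ t * d) P := by
    refine Integrable.mono' hZ₂int.norm
      (((hZ₂ℬ.mono hℬ0 le_rfl).mul hd_meas).aestronglyMeasurable) ?_
    filter_upwards with ω
    simp only [Pi.mul_apply, norm_mul]
    calc ‖Z₂ t ω‖ * ‖d ω‖ ≤ ‖Z₂ t ω‖ * 1 :=
          mul_le_mul_of_nonneg_left (hd_abs ω) (norm_nonneg _)
      _ = ‖Z₂ t ω‖ := mul_one _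
  -- pull-out identities
  have hpull𝒢 : P[(fun ω => d ω * Z₃ t ω) * Y t | sigmaPast 𝔾t (fun _ => t)]
      =ᵐ[P] (fun ω => d ω * Z₃ t ω) * ψ :=
    condExp_mul_of_stronglyMeasurable_left
      (hd_meas𝒢.stronglyMeasurable.mul (hZ₃ℬ.mono hℬ𝒢 le_rfl).stronglyMeasurable)
      hφGY_int hYt_int
  have hpullℬ : P[Z₃ t * (Y t * d) | sigmaPast ℱS (fun _ => t)]
      =ᵐ[P] Z₃ t * P[Y t * d | sigmaPast ℱS (fun _ => t)] :=
    condExp_mul_of_stronglyMeasurable_left hZ₃ℬ.stronglyMeasurable hZ₃Yd_int hYd_int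
  have hpullℬ₂ : P[Z₂ t * d | sigmaPast ℱS (fun _ => t)]
      =ᵐ[P] Z₂ t * P[d | sigmaPast ℱS (fun _ => t)] :=
    condExp_mul_of_stronglyMeasurable_left hZ₂ℬ.stronglyMeasurable hZ₂d_int hd_int
  -- the set-integral equality
  have hseteq : ∀ A : Set Ω, MeasurableSet[sigmaPast 𝔾t (fun _ => t)] A →
      ∫ ω in A, h₁ ω ∂P = ∫ ω in A, h₂ ω ∂P := by
    intro A hA
    obtain ⟨B, hB, hAB⟩ := trace_lemma P h𝔾t hτ0 A hA
    have hB𝒢 : MeasurableSet[sigmaPast 𝔾t (fun _ => t)] B := hℬ𝒢 _ hB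
    have hBm0 : MeasurableSet B := hℬ0 _ hB
    have lhs : ∫ ω in A, h₁ ω ∂P = ∫ ω in B, Z₃ t ω * Z₂ t ω ∂P := by
      calc ∫ ω in A, h₁ ω ∂P = ∫ ω in A ∩ D, ψ ω * Z₃ t ω ∂P := hdmul _ _
        _ = ∫ ω in B ∩ D, ψ ω * Z₃ t ω ∂P := setIntegral_congr_set hAB
        _ = ∫ ω in B, d ω * (ψ ω * Z₃ t ω) ∂P := (hdmul _ _).symm
        _ = ∫ ω in B, ((fun ω => d ω * Z₃ t ω) * ψ) ω ∂P :=
            integral_congr_ae (Filter.Eventually.of_forall fun ω => by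
              simp only [Pi.mul_apply]; ring)
        _ = ∫ ω in B, (P[(fun ω => d ω * Z₃ t ω) * Y t |
              sigmaPast 𝔾t (fun _ => t)]) ω ∂P :=
            setIntegral_congr_ae hBm0 (hpull𝒢.symm.mono fun ω hω _ => hω)
        _ = ∫ ω in B, ((fun ω => d ω * Z₃ t ω) * Y t) ω ∂P :=
            setIntegral_condExp h𝒢0 hφGY_int hB𝒢
        _ = ∫ ω in B, (Z₃ t * (Y t * d)) ω ∂P :=
            integral_congr_ae (Filter.Eventually.of_forall fun ω => by
              simp only [Pi.mul_apply]; ring)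
        _ = ∫ ω in B, (P[Z₃ t * (Y t * d) | sigmaPast ℱS (fun _ => t)]) ω ∂P :=
            (setIntegral_condExp hℬ0 hZ₃Yd_int hB).symm
        _ = ∫ ω in B, Z₃ t ω * Z₂ t ω ∂P := by
            refine setIntegral_congr_ae hBm0 ?_
            filter_upwards [hpullℬ, hB2] with ω hω hω2 _
            rw [hω, Pi.mul_apply, hω2]
    have rhs : ∫ ω in A, h₂ ω ∂P = ∫ ω in B, Z₃ t ω * Z₂ t ω ∂P := by
      calc ∫ ω in A, h₂ ω ∂P = ∫ ω in A ∩ D, Z₂ t ω ∂P := hdmul _ _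
        _ = ∫ ω in B ∩ D, Z₂ t ω ∂P := setIntegral_congr_set hAB
        _ = ∫ ω in B, d ω * Z₂ t ω ∂P := (hdmul _ _).symm
        _ = ∫ ω in B, (Z₂ t * d) ω ∂P :=
            integral_congr_ae (Filter.Eventually.of_forall fun ω => by
              simp only [Pi.mul_apply]; ring)
        _ = ∫ ω in B, (P[Z₂ t * d | sigmaPast ℱS (fun _ => t)]) ω ∂P :=
            (setIntegral_condExp hℬ0 hZ₂d_int hB).symm
        _ = ∫ ω in B, Z₃ t ω * Z₂ t ω ∂P := by
            refine setIntegral_congr_ae hBm0 ?_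
            filter_upwards [hpullℬ₂, hB1] with ω hω hω1 _
            rw [hω, Pi.mul_apply, hω1]
            ring
    rw [lhs, rhs]
  -- conclude the a.e. identity `h₁ = h₂`
  have hmain : h₁ =ᵐ[P] h₂ :=
    ae_eq_of_forall_setIntegral_eq_of_sigmaFinite' h𝒢0
      (fun s _ _ => h₁_int.integrableOn) (fun s _ _ => h₂_int.integrableOn)
      (fun s hs _ => hseteq s hs)
      h₁_sm.aestronglyMeasurable h₂_sm.aestronglyMeasurable
  -- final pointwise conclusion
  filter_upwards [hmain, hZ₁c', hZ₃pos t ht] with ω he h1 hpos hτt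
  have hd1 : d ω = 1 := if_pos hτt
  have he' : ψ ω * Z₃ t ω = Z₂ t ω := by
    have := he
    simp only [h₁def, h₂def, hd1, one_mul] at this
    exact this
  rw [h1, eq_div_iff (ne_of_gt hpos)]
  exact he'
end
end
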